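/- arXiv:1804.02121 — 3 statements merged into one kernel-verified Lean document; each statement's English description precedes it below -/
import Mathlib

section
/- Let H be a complex Hilbert space, let Q be a bounded linear operator on H, and let A₁,…,A_N and B₁,…,B_N be bounded linear operators on H such that ‖Σ_{j=1}^N A_j* A_j‖ ≤ 1, ‖Σ_{j=1}^N A_j A_j*‖ ≤ 1, ‖Σ_{j=1}^N B_j* B_j‖ ≤ 1 and ‖Σ_{j=1}^N B_j B_j*‖ ≤ 1. Then ‖Σ_{j=1}^N A_j Q B_j‖ ≤ ‖Q‖. -/
/-!
Pairing `∑ⱼ Aⱼ Q Bⱼ x` with `y` gives `∑ⱼ ⟪Q Bⱼ x, Aⱼ* y⟫`, which is at most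
`‖Q‖ ∑ⱼ ‖Bⱼ x‖ ‖Aⱼ* y‖`. By Cauchy–Schwarz this is bounded by
`‖Q‖ (∑ⱼ ‖Bⱼ x‖²)^{1/2} (∑ⱼ ‖Aⱼ* y‖²)^{1/2}`, and
`∑ⱼ ‖Cⱼ x‖² = ⟪(∑ⱼ Cⱼ* Cⱼ) x, x⟫ ≤ ‖∑ⱼ Cⱼ* Cⱼ‖ ‖x‖²` for `C = B` and `C = A*`.
-/

open ContinuousLinearMap

namespace ContinuousLinearMap

variable {𝕜 D E F G ι : Type*} [RCLike 𝕜] [Fintype ι]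
  [NormedAddCommGroup D] [InnerProductSpace 𝕜 D]
  [NormedAddCommGroup E] [InnerProductSpace 𝕜 E]
  [NormedAddCommGroup F] [InnerProductSpace 𝕜 F] [CompleteSpace F]
  [NormedAddCommGroup G] [InnerProductSpace 𝕜 G] [CompleteSpace G]

theorem sum_norm_apply_sq_le (C : ι → F →L[𝕜] G) (x : F) :
    ∑ j, ‖C j x‖ ^ 2 ≤ ‖∑ j, adjoint (C j) ∘L C j‖ * ‖x‖ ^ 2 := by
  calc ∑ j, ‖C j x‖ ^ 2 = RCLike.re (inner 𝕜 ((∑ j, adjoint (C j) ∘L C j) x) x) := by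
        simp only [sum_apply, sum_inner, map_sum, apply_norm_sq_eq_inner_adjoint_left]
    _ ≤ ‖inner 𝕜 ((∑ j, adjoint (C j) ∘L C j) x) x‖ := RCLike.re_le_norm _
    _ ≤ ‖(∑ j, adjoint (C j) ∘L C j) x‖ * ‖x‖ := norm_inner_le_norm _ _
    _ ≤ ‖∑ j, adjoint (C j) ∘L C j‖ * ‖x‖ * ‖x‖ := by gcongr; exact le_opNorm _ _
    _ = ‖∑ j, adjoint (C j) ∘L C j‖ * ‖x‖ ^ 2 := by ring

theorem re_inner_sum_comp_comp_apply_le (A : ι → F →L[𝕜] G) (Q : E →L[𝕜] F)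
    (B : ι → D →L[𝕜] E) (x : D) (y : G) :
    RCLike.re (inner 𝕜 ((∑ j, A j ∘L Q ∘L B j) x) y)
      ≤ ‖Q‖ * ∑ j, ‖B j x‖ * ‖adjoint (A j) y‖ := by
  calc RCLike.re (inner 𝕜 ((∑ j, A j ∘L Q ∘L B j) x) y)
      ≤ ‖∑ j, inner 𝕜 (Q (B j x)) (adjoint (A j) y)‖ := by
        simp only [sum_apply, sum_inner, comp_apply, adjoint_inner_right]
        exact RCLike.re_le_norm _
    _ ≤ ∑ j, ‖Q‖ * (‖B j x‖ * ‖adjoint (A j) y‖) := by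
        refine (norm_sum_le _ _).trans (Finset.sum_le_sum fun j _ => ?_)
        calc ‖inner 𝕜 (Q (B j x)) (adjoint (A j) y)‖
            ≤ ‖Q (B j x)‖ * ‖adjoint (A j) y‖ := norm_inner_le_norm _ _
          _ ≤ ‖Q‖ * ‖B j x‖ * ‖adjoint (A j) y‖ := by gcongr; exact le_opNorm _ _
          _ = ‖Q‖ * (‖B j x‖ * ‖adjoint (A j) y‖) := by ring
    _ = ‖Q‖ * ∑ j, ‖B j x‖ * ‖adjoint (A j) y‖ := by rw [Finset.mul_sum]

theorem norm_sum_comp_comp_le [CompleteSpace D] [CompleteSpace E]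
    (A : ι → F →L[𝕜] G) (Q : E →L[𝕜] F) (B : ι → D →L[𝕜] E) :
    ‖∑ j, A j ∘L Q ∘L B j‖
      ≤ ‖Q‖ * (√‖∑ j, adjoint (B j) ∘L B j‖ * √‖∑ j, A j ∘L adjoint (A j)‖) := by
  refine opNorm_le_of_re_inner_le (by positivity) fun x y hx hy => ?_
  calc RCLike.re (inner 𝕜 ((∑ j, A j ∘L Q ∘L B j) x) y)
      ≤ ‖Q‖ * ∑ j, ‖B j x‖ * ‖adjoint (A j) y‖ := re_inner_sum_comp_comp_apply_le A Q B x y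
    _ ≤ ‖Q‖ * (√(∑ j, ‖B j x‖ ^ 2) * √(∑ j, ‖adjoint (A j) y‖ ^ 2)) := by
        gcongr; exact Real.sum_mul_le_sqrt_mul_sqrt _ _ _
    _ ≤ ‖Q‖ * (√‖∑ j, adjoint (B j) ∘L B j‖ * √‖∑ j, A j ∘L adjoint (A j)‖) := by
        gcongr
        · simpa [hx] using sum_norm_apply_sq_le B x
        · simpa [hy] using sum_norm_apply_sq_le (fun j => adjoint (A j)) y

end ContinuousLinearMap

theorem norm_sum_AQB_le_general
    {H : Type*} [NormedAddCommGroup H] [InnerProductSpace ℂ H] [CompleteSpace H]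
    (N : ℕ) (Q : H →L[ℂ] H) (A B : Fin N → (H →L[ℂ] H))
    (hA2 : ‖∑ j, A j * adjoint (A j)‖ ≤ 1)
    (hB1 : ‖∑ j, adjoint (B j) * B j‖ ≤ 1) :
    ‖∑ j, A j * Q * B j‖ ≤ ‖Q‖ := by
  calc ‖∑ j, A j * Q * B j‖
      ≤ ‖Q‖ * (√‖∑ j, adjoint (B j) * B j‖ * √‖∑ j, A j * adjoint (A j)‖) :=
        norm_sum_comp_comp_le A Q B
    _ ≤ ‖Q‖ * (1 * 1) := by
        gcongr <;> exact Real.sqrt_le_one.mpr ‹_›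
    _ = ‖Q‖ := by ring

/-- If `‖Σ Aj* Aj‖ ≤ 1`, `‖Σ Aj Aj*‖ ≤ 1`, `‖Σ Bj* Bj‖ ≤ 1` and `‖Σ Bj Bj*‖ ≤ 1`,
then `‖Σ Aj Q Bj‖ ≤ ‖Q‖`. -/
theorem norm_sum_AQB_le
    {H : Type*} [NormedAddCommGroup H] [InnerProductSpace ℂ H] [CompleteSpace H]
    (N : ℕ) (Q : H →L[ℂ] H) (A B : Fin N → (H →L[ℂ] H))
    (hA1 : ‖∑ j, adjoint (A j) * A j‖ ≤ 1)
    (hA2 : ‖∑ j, A j * adjoint (A j)‖ ≤ 1)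
    (hB1 : ‖∑ j, adjoint (B j) * B j‖ ≤ 1)
    (hB2 : ‖∑ j, B j * adjoint (B j)‖ ≤ 1) :
    ‖∑ j, A j * Q * B j‖ ≤ ‖Q‖ :=
  norm_sum_AQB_le_general N Q A B hA2 hB1
end

section
/- Let f be an analytic polynomial of two variables of degree at most n in each variable, with coefficients a_{k,m} (so a_{k,m} = 0 unless k ≤ n and m ≤ n). Suppose that (T₁,R₁) and (T₂,R₂) are pairs of commuting contractions on a complex Hilbert space H. Then f(T₁,R₁) − f(T₂,R₂) = Σ_{j=1}^n ((S₂*)^j f)(T₁,R₁) (R₁ − R₂) R₂^{j−1} + Σ_{j=1}^n T₁^{j−1} (T₁ − T₂) ((S₁*)^j f)(T₂,R₂). -/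
open Finset

lemma psp1 {A : Type*} [Ring A] (X Y : A) : ∀ m : ℕ,
    X ^ m - Y ^ m = ∑ j ∈ Icc 1 m, X ^ (m - j) * (X - Y) * Y ^ (j - 1)
  | 0 => by simp
  | (m + 1) => by
    have hkey : X ^ (m + 1) - Y ^ (m + 1) = X * (X ^ m - Y ^ m) + (X - Y) * Y ^ m := by
      rw [mul_sub, sub_mul, ← pow_succ', ← pow_succ', sub_add_sub_cancel]
    rw [Finset.sum_Icc_succ_top (by omega)]
    have h : ∀ j ∈ Icc 1 m, X ^ (m + 1 - j) * (X - Y) * Y ^ (j - 1)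
        = X * (X ^ (m - j) * (X - Y) * Y ^ (j - 1)) := by
      intro j hj
      simp only [mem_Icc] at hj
      have : m + 1 - j = (m - j) + 1 := by omega
      rw [this, pow_succ']
      noncomm_ring
    rw [Finset.sum_congr rfl h, ← Finset.mul_sum, ← psp1 X Y m, hkey]
    simp

lemma psp2 {A : Type*} [Ring A] (X Y : A) : ∀ m : ℕ,
    X ^ m - Y ^ m = ∑ j ∈ Icc 1 m, X ^ (j - 1) * (X - Y) * Y ^ (m - j)
  | 0 => by simp
  | (m + 1) => by
    rw [Finset.sum_Icc_succ_top (by omega)]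
    have h : ∀ j ∈ Icc 1 m, X ^ (j - 1) * (X - Y) * Y ^ (m + 1 - j)
        = (X ^ (j - 1) * (X - Y) * Y ^ (m - j)) * Y := by
      intro j hj
      simp only [mem_Icc] at hj
      have : m + 1 - j = (m - j) + 1 := by omega
      rw [this, pow_succ]
      noncomm_ring
    rw [Finset.sum_congr rfl h, ← Finset.sum_mul, ← psp2 X Y m]
    simp only [pow_succ, pow_succ', Nat.add_sub_cancel, Nat.sub_self, pow_zero, mul_one, one_mul]
    noncomm_ring

lemma key1 {A : Type*} [Ring A] [Module ℂ A] [IsScalarTower ℂ A A] [SMulCommClass ℂ A A]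
    (n : ℕ) (b : ℕ → ℂ) (hb : ∀ m, n < m → b m = 0) (X Y : A) :
    ∑ m ∈ range (n + 1), b m • (X ^ m - Y ^ m)
      = ∑ j ∈ Icc 1 n, (∑ m ∈ range (n + 1), b (m + j) • X ^ m) * (X - Y) * Y ^ (j - 1) := by
  have step1 : ∑ m ∈ range (n + 1), b m • (X ^ m - Y ^ m)
      = ∑ m ∈ range (n + 1), ∑ j ∈ Icc 1 m, b m • (X ^ (m - j) * (X - Y) * Y ^ (j - 1)) := by
    refine Finset.sum_congr rfl fun m _ => ?_
    rw [psp1, Finset.smul_sum]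
  rw [step1]
  rw [Finset.sum_comm' (t' := Icc 1 n) (s' := fun j => Icc j n)
    (by intro m j; simp only [mem_range, mem_Icc]; omega)]
  refine Finset.sum_congr rfl fun j hj => ?_
  simp only [mem_Icc] at hj
  have : ∑ m ∈ Icc j n, b m • (X ^ (m - j) * (X - Y) * Y ^ (j - 1))
      = ∑ i ∈ range (n + 1 - j), b (i + j) • (X ^ i * (X - Y) * Y ^ (j - 1)) := by
    rw [← Finset.Ico_add_one_right_eq_Icc, Finset.sum_Ico_eq_sum_range]
    refine Finset.sum_congr rfl fun i _ => ?_
    have h1 : j + i - j = i := by omega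
    rw [h1, Nat.add_comm j i]
  rw [this]
  have hext : ∑ i ∈ range (n + 1 - j), b (i + j) • (X ^ i * (X - Y) * Y ^ (j - 1))
      = ∑ i ∈ range (n + 1), b (i + j) • (X ^ i * (X - Y) * Y ^ (j - 1)) := by
    apply Finset.sum_subset
    · apply Finset.range_subset_range.2; omega
    · intro i _ hi
      simp only [mem_range] at hi
      rw [hb (i + j) (by omega), zero_smul]
  rw [hext, Finset.sum_mul, Finset.sum_mul]
  exact Finset.sum_congr rfl fun i _ => by rw [smul_mul_assoc, smul_mul_assoc, mul_assoc]

lemma key2 {A : Type*} [Ring A] [Module ℂ A] [IsScalarTower ℂ A A] [SMulCommClass ℂ A A]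
    (n : ℕ) (b : ℕ → ℂ) (hb : ∀ m, n < m → b m = 0) (X Y : A) :
    ∑ m ∈ range (n + 1), b m • (X ^ m - Y ^ m)
      = ∑ j ∈ Icc 1 n, X ^ (j - 1) * (X - Y) * (∑ m ∈ range (n + 1), b (m + j) • Y ^ m) := by
  have step1 : ∑ m ∈ range (n + 1), b m • (X ^ m - Y ^ m)
      = ∑ m ∈ range (n + 1), ∑ j ∈ Icc 1 m, b m • (X ^ (j - 1) * (X - Y) * Y ^ (m - j)) := by
    refine Finset.sum_congr rfl fun m _ => ?_
    rw [psp2, Finset.smul_sum]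
  rw [step1]
  rw [Finset.sum_comm' (t' := Icc 1 n) (s' := fun j => Icc j n)
    (by intro m j; simp only [mem_range, mem_Icc]; omega)]
  refine Finset.sum_congr rfl fun j hj => ?_
  simp only [mem_Icc] at hj
  have : ∑ m ∈ Icc j n, b m • (X ^ (j - 1) * (X - Y) * Y ^ (m - j))
      = ∑ i ∈ range (n + 1 - j), b (i + j) • (X ^ (j - 1) * (X - Y) * Y ^ i) := by
    rw [← Finset.Ico_add_one_right_eq_Icc, Finset.sum_Ico_eq_sum_range]
    refine Finset.sum_congr rfl fun i _ => ?_
    have h1 : j + i - j = i := by omega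
    rw [h1, Nat.add_comm j i]
  rw [this]
  have hext : ∑ i ∈ range (n + 1 - j), b (i + j) • (X ^ (j - 1) * (X - Y) * Y ^ i)
      = ∑ i ∈ range (n + 1), b (i + j) • (X ^ (j - 1) * (X - Y) * Y ^ i) := by
    apply Finset.sum_subset
    · apply Finset.range_subset_range.2; omega
    · intro i _ hi
      simp only [mem_range] at hi
      rw [hb (i + j) (by omega), zero_smul]
  rw [hext, Finset.mul_sum]
  exact Finset.sum_congr rfl fun i _ => by rw [mul_smul_comm, mul_assoc]

/-- `f(T,R) = Σ_{k,m ≤ n} a_{k,m} T^k R^m`. -/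
noncomputable def polyOp2 {H : Type*} [NormedAddCommGroup H] [InnerProductSpace ℂ H]
    (n : ℕ) (a : ℕ → ℕ → ℂ) (T R : H →L[ℂ] H) : H →L[ℂ] H :=
  ∑ k ∈ Finset.range (n + 1), ∑ m ∈ Finset.range (n + 1), a k m • (T ^ k * R ^ m)

/-- The key algebraic identity: for an analytic polynomial `f` of degree at most `n` in each
variable and pairs `(T₁,R₁)`, `(T₂,R₂)` of commuting contractions,
`f(T₁,R₁) − f(T₂,R₂) = Σ_{j=1}^n ((S₂*)^j f)(T₁,R₁)(R₁−R₂)R₂^{j−1}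
  + Σ_{j=1}^n T₁^{j−1}(T₁−T₂)((S₁*)^j f)(T₂,R₂)`,
where `(S₁*)^j f` has coefficients `a_{k+j,m}` and `(S₂*)^j f` has coefficients `a_{k,m+j}`. -/
theorem difference_identity_commuting_contractions
    {H : Type*} [NormedAddCommGroup H] [InnerProductSpace ℂ H]
    (n : ℕ) (a : ℕ → ℕ → ℂ) (ha : ∀ k m : ℕ, n < k ∨ n < m → a k m = 0)
    (T₁ R₁ T₂ R₂ : H →L[ℂ] H)
    (hT₁ : ‖T₁‖ ≤ 1) (hR₁ : ‖R₁‖ ≤ 1) (hc₁ : T₁ * R₁ = R₁ * T₁)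
    (hT₂ : ‖T₂‖ ≤ 1) (hR₂ : ‖R₂‖ ≤ 1) (hc₂ : T₂ * R₂ = R₂ * T₂) :
    polyOp2 n a T₁ R₁ - polyOp2 n a T₂ R₂ =
      (∑ j ∈ Finset.Icc 1 n,
        polyOp2 n (fun k m => a k (m + j)) T₁ R₁ * (R₁ - R₂) * R₂ ^ (j - 1)) +
      (∑ j ∈ Finset.Icc 1 n,
        T₁ ^ (j - 1) * (T₁ - T₂) * polyOp2 n (fun k m => a (k + j) m) T₂ R₂) := by
  simp only [polyOp2]
  set P1 : H →L[ℂ] H := ∑ k ∈ range (n + 1), ∑ m ∈ range (n + 1), a k m • (T₁ ^ k * R₂ ^ m)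
    with hP1
  have partA : (∑ k ∈ range (n + 1), ∑ m ∈ range (n + 1), a k m • (T₁ ^ k * R₁ ^ m)) - P1
      = ∑ j ∈ Icc 1 n, (∑ k ∈ range (n + 1), ∑ m ∈ range (n + 1),
          a k (m + j) • (T₁ ^ k * R₁ ^ m)) * (R₁ - R₂) * R₂ ^ (j - 1) := by
    rw [hP1, ← Finset.sum_sub_distrib]
    have h1 : ∀ k ∈ range (n + 1),
        (∑ m ∈ range (n + 1), a k m • (T₁ ^ k * R₁ ^ m))
          - (∑ m ∈ range (n + 1), a k m • (T₁ ^ k * R₂ ^ m))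
        = T₁ ^ k * ∑ m ∈ range (n + 1), a k m • (R₁ ^ m - R₂ ^ m) := by
      intro k _
      rw [Finset.mul_sum, ← Finset.sum_sub_distrib]
      refine Finset.sum_congr rfl fun m _ => ?_
      rw [mul_smul_comm, mul_sub, smul_sub]
    rw [Finset.sum_congr rfl h1]
    have h2 : ∀ k ∈ range (n + 1),
        T₁ ^ k * ∑ m ∈ range (n + 1), a k m • (R₁ ^ m - R₂ ^ m)
        = T₁ ^ k * ∑ j ∈ Icc 1 n,
            (∑ m ∈ range (n + 1), a k (m + j) • R₁ ^ m) * (R₁ - R₂) * R₂ ^ (j - 1) := by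
      intro k _
      rw [key1 n (a k) (fun m hm => ha k m (Or.inr hm)) R₁ R₂]
    rw [Finset.sum_congr rfl h2]
    simp only [Finset.mul_sum]
    rw [Finset.sum_comm]
    refine Finset.sum_congr rfl fun j _ => ?_
    simp only [Finset.sum_mul, Finset.mul_sum, smul_mul_assoc, mul_smul_comm, mul_assoc]
  have partB : P1 - (∑ k ∈ range (n + 1), ∑ m ∈ range (n + 1), a k m • (T₂ ^ k * R₂ ^ m))
      = ∑ j ∈ Icc 1 n, T₁ ^ (j - 1) * (T₁ - T₂) *
          (∑ k ∈ range (n + 1), ∑ m ∈ range (n + 1), a (k + j) m • (T₂ ^ k * R₂ ^ m)) := by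
    rw [hP1, Finset.sum_comm (f := fun k m => a k m • (T₁ ^ k * R₂ ^ m)),
      Finset.sum_comm (f := fun k m => a k m • (T₂ ^ k * R₂ ^ m)), ← Finset.sum_sub_distrib]
    have h1 : ∀ m ∈ range (n + 1),
        (∑ k ∈ range (n + 1), a k m • (T₁ ^ k * R₂ ^ m))
          - (∑ k ∈ range (n + 1), a k m • (T₂ ^ k * R₂ ^ m))
        = (∑ k ∈ range (n + 1), a k m • (T₁ ^ k - T₂ ^ k)) * R₂ ^ m := by
      intro m _
      rw [Finset.sum_mul, ← Finset.sum_sub_distrib]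
      refine Finset.sum_congr rfl fun k _ => ?_
      rw [smul_mul_assoc, sub_mul, smul_sub]
    rw [Finset.sum_congr rfl h1]
    have h2 : ∀ m ∈ range (n + 1),
        (∑ k ∈ range (n + 1), a k m • (T₁ ^ k - T₂ ^ k)) * R₂ ^ m
        = (∑ j ∈ Icc 1 n, T₁ ^ (j - 1) * (T₁ - T₂) *
            (∑ k ∈ range (n + 1), a (k + j) m • T₂ ^ k)) * R₂ ^ m := by
      intro m _
      rw [key2 n (fun k => a k m) (fun k hk => ha k m (Or.inl hk)) T₁ T₂]
    rw [Finset.sum_congr rfl h2]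
    simp only [Finset.sum_mul]
    rw [Finset.sum_comm]
    refine Finset.sum_congr rfl fun j _ => ?_
    rw [Finset.sum_comm (f := fun k m => a (k + j) m • (T₂ ^ k * R₂ ^ m))]
    simp only [Finset.sum_mul, Finset.mul_sum, smul_mul_assoc, mul_smul_comm, mul_assoc]
  rw [← sub_add_sub_cancel _ P1 _, partA, partB]
end

section
/- There exists a constant C > 0 with the following property: for every analytic polynomial f(z) = Σ_{k≥0} a_k z^k of one variable, every positive integer n, and every complex number ζ with |ζ| = 1, one has Σ_{j=1}^n | Σ_{k≥0} a_{k+j} ζ^k |² ≤ C · n · (sup{ |f(z)| : |z| = 1 })². -/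
/-!
Write `B_j = ((S*)^j f)(ζ)`. Since `B_j = a_j + ζ B_{j+1}`, the generating function
`G(w) = Σ_j B_j w^j` satisfies `(w - ζ) G(w) = w f(w) - ζ f(ζ)`, so by the maximum principle
`|G(w)| |w - ζ| ≤ 2‖f‖_∞` on the closed disc. On the circle of radius `r < 1` the function
`1 / (ζ - w)` has square mean `1 / (1 - r²)`, and Parseval's identity gives
`Σ_j |B_j|² r^{2j} ≲ ‖f‖²_∞ / (1 - r²)`. Taking `r = 1 - 1/(2n)`, the weights `r^{2j}` stay
above `1/4` for `j ≤ n` while `1 / (1 - r²) ≤ 2n`.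
-/

/-- `f(z) = Σ_{k ≤ d} a_k z^k`. -/
noncomputable def polyEval1 (d : ℕ) (a : ℕ → ℂ) (z : ℂ) : ℂ :=
  ∑ k ∈ Finset.range (d + 1), a k * z ^ k

/-- `sup { |f(z)| : |z| = 1 }`. -/
noncomputable def supNormT1 (d : ℕ) (a : ℕ → ℂ) : ℝ :=
  sSup {x : ℝ | ∃ z : ℂ, ‖z‖ = 1 ∧ x = ‖polyEval1 d a z‖}

open Finset ComplexConjugate

lemma sum_range_sq_norm_eq_circleAverage (c : ℕ → ℂ) (m : ℕ) :
    ∑ j ∈ range m, ‖c j‖ ^ 2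
      = Real.circleAverage (fun z => ‖∑ j ∈ range m, c j * z ^ j‖ ^ 2) 0 1 := by
  set p : Polynomial ℂ := ∑ j ∈ range m, Polynomial.monomial j (c j)
  have hcoeff (i : ℕ) : p.coeff i = if i ∈ range m then c i else 0 := by
    simp [p, Polynomial.coeff_monomial]
  have hsupp : p.support ⊆ range m := fun i hi => by
    by_contra h
    exact Polynomial.mem_support_iff.mp hi (by rw [hcoeff, if_neg h])
  have hparseval := p.sum_sq_norm_coeff_eq_circleAverage
  rw [sum_subset hsupp fun i _ hi => by
    rw [Polynomial.notMem_support_iff.mp hi, norm_zero, zero_pow two_ne_zero]] at hparseval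
  convert hparseval using 2 with j hj z
  · rw [hcoeff, if_pos hj]
  · simp [p, Polynomial.eval_finsetSum]

lemma sum_range_sq_norm_le_of_norm_le_on_circle {c q : ℕ → ℂ} {m N : ℕ} {K : ℝ}
    (h : ∀ z : ℂ, ‖z‖ = 1 →
      ‖∑ j ∈ range m, c j * z ^ j‖ ≤ K * ‖∑ k ∈ range N, q k * z ^ k‖) :
    ∑ j ∈ range m, ‖c j‖ ^ 2 ≤ K ^ 2 * ∑ k ∈ range N, ‖q k‖ ^ 2 := by
  rw [sum_range_sq_norm_eq_circleAverage, sum_range_sq_norm_eq_circleAverage,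
    ← smul_eq_mul, ← Real.circleAverage_fun_smul]
  refine Real.circleAverage_mono (ContinuousOn.circleIntegrable' (by fun_prop))
    (ContinuousOn.circleIntegrable' (by fun_prop)) fun z hz => ?_
  rw [abs_one, mem_sphere_zero_iff_norm] at hz
  rw [smul_eq_mul, ← mul_pow]
  exact pow_le_pow_left₀ (norm_nonneg _) (h z hz) 2

lemma sub_mul_sum_conj_pow_mul_pow {ζ : ℂ} (hζ : ‖ζ‖ = 1) (w : ℂ) (N : ℕ) :
    (ζ - w) * ∑ k ∈ range N, conj ζ ^ (k + 1) * w ^ k = 1 - (conj ζ * w) ^ N := by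
  have hconj : conj ζ * ζ = 1 := by rw [Complex.conj_mul', hζ]; norm_num
  rw [← mul_neg_geom_sum, mul_sum, mul_sum]
  exact sum_congr rfl fun k _ => by linear_combination conj ζ ^ k * w ^ k * hconj

lemma one_half_le_one_sub_pow {ε : ℝ} (hε : ε ≤ 2) {j : ℕ} (hj : j * ε ≤ 1 / 2) :
    1 / 2 ≤ (1 - ε) ^ j := by
  have hbernoulli := one_add_mul_le_pow (a := -ε) (by linarith) j
  rw [← sub_eq_add_neg, mul_neg, ← sub_eq_add_neg] at hbernoulli
  linarith

section PolyEval1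

variable {d : ℕ} {a : ℕ → ℂ}

lemma polyEval1_eq_sum_range (ha : ∀ k, d < k → a k = 0) {m : ℕ} (hm : d < m) (z : ℂ) :
    polyEval1 d a z = ∑ k ∈ range m, a k * z ^ k :=
  sum_subset (range_subset_range.mpr hm) fun k _ hk => by
    rw [ha k (by simpa using hk), zero_mul]

lemma norm_polyEval1_le_supNormT1 {w : ℂ} (hw : ‖w‖ ≤ 1) :
    ‖polyEval1 d a w‖ ≤ supNormT1 d a := by
  have hbdd : BddAbove {x : ℝ | ∃ z : ℂ, ‖z‖ = 1 ∧ x = ‖polyEval1 d a z‖} := by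
    refine ⟨∑ k ∈ range (d + 1), ‖a k‖, ?_⟩
    rintro x ⟨z, hz, rfl⟩
    refine (norm_sum_le _ _).trans_eq (sum_congr rfl fun k _ => ?_)
    rw [norm_mul, norm_pow, hz, one_pow, mul_one]
  have hdiff : Differentiable ℂ (polyEval1 d a) :=
    Differentiable.fun_sum fun k _ => (differentiable_pow k).const_mul _
  refine Complex.norm_le_of_forall_mem_frontier_norm_le (U := Metric.ball 0 1)
    Metric.isBounded_ball hdiff.diffContOnCl (fun z hz => ?_) ?_
  · rw [frontier_ball (0 : ℂ) one_ne_zero, mem_sphere_zero_iff_norm] at hz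
    exact le_csSup hbdd ⟨z, hz, rfl⟩
  · rwa [closure_ball (0 : ℂ) one_ne_zero, mem_closedBall_zero_iff]

lemma polyEval1_backwardShift_eq_zero (ha : ∀ k, d < k → a k = 0) {j : ℕ} (hj : d < j)
    (ζ : ℂ) : polyEval1 d (fun k => a (k + j)) ζ = 0 :=
  sum_eq_zero fun k _ => by simp only [ha _ (by omega : d < k + j), zero_mul]

lemma polyEval1_backwardShift_eq_add (ha : ∀ k, d < k → a k = 0) (j : ℕ) (ζ : ℂ) :
    polyEval1 d (fun k => a (k + j)) ζ
      = a j + ζ * polyEval1 d (fun k => a (k + (j + 1))) ζ := by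
  rw [polyEval1_eq_sum_range (a := fun k => a (k + j)) (fun k hk => ha _ (by omega))
    (m := d + 1 + 1) (by omega), sum_range_succ', polyEval1, mul_sum]
  simp only [zero_add, pow_zero, mul_one]
  rw [add_comm]
  congr 1
  exact sum_congr rfl fun k _ => by rw [add_right_comm, add_assoc, pow_succ]; ring

lemma sub_mul_polyEval1_backwardShifts (ha : ∀ k, d < k → a k = 0) (ζ w : ℂ) :
    (w - ζ) * polyEval1 d (fun j => polyEval1 d (fun k => a (k + j)) ζ) w
      = w * polyEval1 d a w - ζ * polyEval1 d a ζ := by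
  set B : ℕ → ℂ := fun j => polyEval1 d (fun k => a (k + j)) ζ
  set S := ∑ j ∈ range (d + 1), B (j + 1) * w ^ j
  have hrec : polyEval1 d B w = polyEval1 d a w + ζ * S := by
    rw [mul_sum, polyEval1, polyEval1, ← sum_add_distrib]
    refine sum_congr rfl fun j _ => ?_
    simp only [B, polyEval1_backwardShift_eq_add ha j ζ]
    ring
  have hshift : polyEval1 d B w = w * S + polyEval1 d a ζ := by
    rw [polyEval1_eq_sum_range (fun j hj => polyEval1_backwardShift_eq_zero ha hj ζ)
      (m := d + 1 + 1) (by omega), sum_range_succ', mul_sum]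
    congr 1
    · exact sum_congr rfl fun j _ => by ring
    · simp
  linear_combination w * hrec - ζ * hshift

/-- The truncated kernel `Σ_{k<N} ζ̄^(k+1) w^k` stands in for the non-polynomial `1 / (ζ - w)`;
`|w|^N ≤ 1/2` keeps it above `1 / (2|ζ - w|)`. -/
lemma norm_polyEval1_backwardShifts_le (ha : ∀ k, d < k → a k = 0) {ζ w : ℂ} (hζ : ‖ζ‖ = 1)
    (hw : ‖w‖ ≤ 1) {N : ℕ} (hN : ‖w‖ ^ N ≤ 1 / 2) :
    ‖polyEval1 d (fun j => polyEval1 d (fun k => a (k + j)) ζ) w‖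
      ≤ 4 * supNormT1 d a * ‖∑ k ∈ range N, conj ζ ^ (k + 1) * w ^ k‖ := by
  set G := polyEval1 d (fun j => polyEval1 d (fun k => a (k + j)) ζ) w
  set Q := ∑ k ∈ range N, conj ζ ^ (k + 1) * w ^ k
  set M := supNormT1 d a
  have hvalue {z : ℂ} (hz : ‖z‖ ≤ 1) : ‖z * polyEval1 d a z‖ ≤ M := by
    rw [norm_mul]
    exact (mul_le_of_le_one_left (norm_nonneg _) hz).trans (norm_polyEval1_le_supNormT1 hz)
  have hG : ‖w - ζ‖ * ‖G‖ ≤ 2 * M := by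
    rw [← norm_mul, sub_mul_polyEval1_backwardShifts ha]
    linarith [norm_sub_le (w * polyEval1 d a w) (ζ * polyEval1 d a ζ), hvalue hw,
      hvalue hζ.le]
  have hQ : 1 / 2 ≤ ‖w - ζ‖ * ‖Q‖ := by
    rw [norm_sub_rev, ← norm_mul, sub_mul_sum_conj_pow_mul_pow hζ]
    have := norm_sub_norm_le 1 ((conj ζ * w) ^ N)
    rw [norm_one, norm_pow, norm_mul, Complex.norm_conj, hζ, one_mul] at this
    linarith
  nlinarith [mul_le_mul_of_nonneg_left hQ (norm_nonneg G),
    mul_le_mul_of_nonneg_right hG (norm_nonneg Q)]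

lemma sum_sq_norm_backwardShifts_mul_pow_le (ha : ∀ k, d < k → a k = 0) {ζ : ℂ} (hζ : ‖ζ‖ = 1)
    {r : ℝ} (hr0 : 0 ≤ r) (hr1 : r < 1) {m : ℕ} (hm : d < m) :
    ∑ j ∈ range m, ‖polyEval1 d (fun k => a (k + j)) ζ‖ ^ 2 * (r ^ 2) ^ j
      ≤ 16 * supNormT1 d a ^ 2 / (1 - r ^ 2) := by
  obtain ⟨N, hN⟩ := exists_pow_lt_of_lt_one one_half_pos hr1
  have hdom := sum_range_sq_norm_le_of_norm_le_on_circle (m := m) (N := N)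
    (K := 4 * supNormT1 d a) (c := fun j => polyEval1 d (fun k => a (k + j)) ζ * (r : ℂ) ^ j)
    (q := fun k => conj ζ ^ (k + 1) * (r : ℂ) ^ k) fun z hz => by
      have hrz : ‖(r : ℂ) * z‖ = r := by simp [hz, abs_of_nonneg hr0]
      convert norm_polyEval1_backwardShifts_le ha hζ (w := r * z) (hrz.trans_le hr1.le)
        (N := N) (by rw [hrz]; exact hN.le) using 3
      · rw [polyEval1_eq_sum_range (fun j hj => polyEval1_backwardShift_eq_zero ha hj ζ) hm]
        exact sum_congr rfl fun j _ => by ring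
      · exact sum_congr rfl fun k _ => by ring
  have hr2 : r ^ 2 < 1 := by nlinarith
  calc ∑ j ∈ range m, ‖polyEval1 d (fun k => a (k + j)) ζ‖ ^ 2 * (r ^ 2) ^ j
      = ∑ j ∈ range m, ‖polyEval1 d (fun k => a (k + j)) ζ * (r : ℂ) ^ j‖ ^ 2 :=
        sum_congr rfl fun j _ => by rw [norm_mul, norm_pow, Complex.norm_of_nonneg hr0]; ring
    _ ≤ (4 * supNormT1 d a) ^ 2 * ∑ k ∈ range N, ‖conj ζ ^ (k + 1) * (r : ℂ) ^ k‖ ^ 2 := hdom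
    _ = 16 * supNormT1 d a ^ 2 * ∑ k ∈ range N, (r ^ 2) ^ k := by
        rw [mul_pow]
        congr 1
        · norm_num
        · refine sum_congr rfl fun k _ => ?_
          rw [norm_mul, norm_pow, norm_pow, Complex.norm_conj, hζ, Complex.norm_of_nonneg hr0]
          ring
    _ ≤ 16 * supNormT1 d a ^ 2 * (1 / (1 - r ^ 2)) := by
        gcongr
        have := geom_sum_Ico_le_of_lt_one (x := r ^ 2) (m := 0) (n := N) (sq_nonneg r) hr2
        rwa [← Finset.range_eq_Ico, pow_zero] at this
    _ = 16 * supNormT1 d a ^ 2 / (1 - r ^ 2) := mul_one_div _ _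

end PolyEval1

/-- There is a constant `C > 0` such that for every analytic polynomial
`f(z) = Σ a_k z^k` of one variable, every positive integer `n`, and every `ζ` with
`|ζ| = 1`, one has `Σ_{j=1}^n |((S*)^j f)(ζ)|² ≤ C n ‖f‖²_{H∞}`, where
`((S*)^j f)(z) = Σ_k a_{k+j} z^k`. -/
theorem backward_shifts_square_sum_estimate :
    ∃ C : ℝ, 0 < C ∧
      ∀ (d : ℕ) (a : ℕ → ℂ), (∀ k : ℕ, d < k → a k = 0) →
        ∀ n : ℕ, 0 < n → ∀ ζ : ℂ, ‖ζ‖ = 1 →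
          ∑ j ∈ Finset.Icc 1 n,
              (‖polyEval1 d (fun k => a (k + j)) ζ‖) ^ 2 ≤
            C * n * (supNormT1 d a) ^ 2 := by
  refine ⟨128, by norm_num, fun d a ha n hn ζ hζ => ?_⟩
  set B : ℕ → ℂ := fun j => polyEval1 d (fun k => a (k + j)) ζ
  set M := supNormT1 d a
  have hn1 : (1 : ℝ) ≤ n := by exact_mod_cast hn
  obtain ⟨ε, hε, hnε⟩ : ∃ ε : ℝ, 0 < ε ∧ n * ε = 1 / 2 :=
    ⟨1 / (2 * n), by positivity, by field_simp⟩
  have hε1 : ε ≤ 1 / 2 := by nlinarith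
  have hweight (j : ℕ) (hj : j ∈ Icc 1 n) : 1 / 4 ≤ ((1 - ε) ^ 2) ^ j := by
    have hjn : (j : ℝ) ≤ n := by exact_mod_cast (mem_Icc.mp hj).2
    have := one_half_le_one_sub_pow (by linarith) (j := j) (by nlinarith)
    rw [← pow_mul, mul_comm, pow_mul]
    nlinarith
  calc ∑ j ∈ Icc 1 n, ‖B j‖ ^ 2
      ≤ 4 * ∑ j ∈ Icc 1 n, ‖B j‖ ^ 2 * ((1 - ε) ^ 2) ^ j := by
        rw [mul_sum]
        exact sum_le_sum fun j hj => by nlinarith [hweight j hj, sq_nonneg ‖B j‖]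
    _ ≤ 4 * ∑ j ∈ range (n + d + 1), ‖B j‖ ^ 2 * ((1 - ε) ^ 2) ^ j := by
        gcongr
        exact fun j hj => by simp only [mem_Icc, mem_range] at hj ⊢; omega
    _ ≤ 4 * (16 * M ^ 2 / (1 - (1 - ε) ^ 2)) := by
        gcongr
        exact sum_sq_norm_backwardShifts_mul_pow_le ha hζ (by linarith) (by linarith) (by omega)
    _ ≤ 4 * (16 * M ^ 2 / ε) := by
        gcongr
        nlinarith
    _ = 128 * n * M ^ 2 := by
        field_simp
        linear_combination (-128 * M ^ 2) * hnε
end
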